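/- Let A be a positive semi-definite real symmetric n×n matrix. Then ρ_per(A) + η_per(A) = n. -/

import Mathlib

/-- The permanent of a (possibly rectangular) matrix whose rows and columns are indexed by
finite types: the sum over all bijections `e : ι ≃ κ` of `∏ i, M i (e i)`.
For a square matrix this is the usual permanent `∑_{σ ∈ S_n} ∏_{i} M i (σ i)`. -/
noncomputable def Matrix.per {ι κ R : Type*} [Fintype ι] [Fintype κ] [DecidableEq ι]
    [DecidableEq κ] [CommSemiring R] (M : Matrix ι κ R) : R :=
  ∑ e : ι ≃ κ, ∏ i, M i (e i)

/-- The permanental rank `ρ_per(A)` of an `n × n` matrix: the largest `k` such that some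
`k × k` submatrix (rows chosen by an injection `f`, columns by an injection `g`) has
nonzero permanent. -/
noncomputable def permRank {n : ℕ} {R : Type*} [CommSemiring R]
    (A : Matrix (Fin n) (Fin n) R) : ℕ :=
  sSup {k | ∃ f g : Fin k → Fin n, Function.Injective f ∧ Function.Injective g ∧
    (A.submatrix f g).per ≠ 0}

/-- The permanental polynomial `π(A, x) = per(A - x I)`. -/
noncomputable def permPoly {n : ℕ} {R : Type*} [CommRing R]
    (A : Matrix (Fin n) (Fin n) R) : Polynomial R :=
  (A.map Polynomial.C - (Polynomial.X : Polynomial R) • (1 : Matrix (Fin n) (Fin n) (Polynomial R))).per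

/-- The permanental nullity `η_per(A)`: the multiplicity of `0` as a root of the
permanental polynomial. -/
noncomputable def permNullity {n : ℕ} {R : Type*} [CommRing R]
    (A : Matrix (Fin n) (Fin n) R) : ℕ :=
  (permPoly A).rootMultiplicity 0

/-!
Write `A = Bᵀ B`. By the Cauchy–Binet formula for permanents, `k! · per A[f, g]` is the inner
product of the vectors `h ↦ per B[h, f]` and `h ↦ per B[h, g]`, so principal permanents are
nonnegative and `per A[f, g]² ≤ per A[f, f] · per A[g, g]`. Hence a nonzero `k × k` permanental
minor forces the sum `E_k` of the principal ones to be positive, and `ρ_per(A)` is the largest `k`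
with `E_k ≠ 0`. On the other hand `per(A - xI) = ∑ₖ E_k (-x)^(n-k)`, whose order of vanishing at
`0` is `n` minus that same `k`.
-/

open Finset Polynomial

namespace Matrix

section Permanent

variable {ι κ ι' κ' m R : Type*} [Fintype ι] [DecidableEq ι] [Fintype κ] [DecidableEq κ]
  [CommSemiring R]

theorem per_submatrix_equiv [Fintype ι'] [DecidableEq ι'] [Fintype κ'] [DecidableEq κ']
    (M : Matrix ι κ R) (e₁ : ι' ≃ ι) (e₂ : κ' ≃ κ) : (M.submatrix e₁ e₂).per = M.per :=
  Fintype.sum_equiv (e₁.equivCongr e₂) _ _ fun e =>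
    Fintype.prod_equiv e₁ _ _ fun i => by simp [Equiv.equivCongr]

theorem per_of_isEmpty [IsEmpty ι] (M : Matrix ι ι R) : M.per = 1 := by
  simp [per]

theorem per_map {S : Type*} [CommSemiring S] (f : R →+* S) (M : Matrix ι κ R) :
    (M.map f).per = f M.per := by
  simp [per, map_sum, map_prod]

/-- Cauchy–Binet formula for permanents. -/
theorem card_perm_mul_per_transpose_mul [Fintype m] (U V : Matrix m ι R) :
    (Fintype.card (Equiv.Perm ι) : R) * (Uᵀ * V).per
      = ∑ h : ι → m, (U.submatrix h id).per * (V.submatrix h id).per := by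
  calc (Fintype.card (Equiv.Perm ι) : R) * (Uᵀ * V).per
      = ∑ σ : Equiv.Perm ι, ((Uᵀ * V).submatrix σ id).per := by
        have (σ : Equiv.Perm ι) : ((Uᵀ * V).submatrix σ id).per = (Uᵀ * V).per :=
          per_submatrix_equiv _ σ (Equiv.refl ι)
        simp [this]
    _ = ∑ σ : Equiv.Perm ι, ∑ τ : Equiv.Perm ι, ∑ h : ι → m,
          (∏ i, U (h i) (σ i)) * ∏ i, V (h i) (τ i) := by
        refine sum_congr rfl fun σ _ => sum_congr rfl fun τ _ => ?_
        simp only [submatrix_apply, mul_apply, transpose_apply, Fintype.prod_sum, id,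
          prod_mul_distrib]
    _ = ∑ h : ι → m, (U.submatrix h id).per * (V.submatrix h id).per := by
        simp_rw [per, sum_mul_sum, submatrix_apply, id]
        exact (sum_congr rfl fun _ _ => sum_comm).trans sum_comm

end Permanent

theorem transpose_mul_submatrix {ι κ m n α : Type*} [Fintype m] [Mul α] [AddCommMonoid α]
    (B : Matrix m n α) (C : Matrix m n α) (f : ι → n) (g : κ → n) :
    (Bᵀ * C).submatrix f g = (B.submatrix id f)ᵀ * C.submatrix id g := by
  rw [submatrix_mul _ _ _ id _ Function.bijective_id, transpose_submatrix]

section Gram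

variable {ι m R : Type*} [Fintype ι] [DecidableEq ι] [Fintype m]
  [CommRing R] [LinearOrder R] [IsStrictOrderedRing R]

theorem per_transpose_mul_self_nonneg (U : Matrix m ι R) : 0 ≤ (Uᵀ * U).per := by
  refine nonneg_of_mul_nonneg_right ?_ (Nat.cast_pos.mpr (Fintype.card_pos (α := Equiv.Perm ι)))
  rw [card_perm_mul_per_transpose_mul]
  exact sum_nonneg fun h _ => mul_self_nonneg _

theorem sq_per_transpose_mul_le (U V : Matrix m ι R) :
    (Uᵀ * V).per ^ 2 ≤ (Uᵀ * U).per * (Vᵀ * V).per := by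
  set c : R := (Fintype.card (Equiv.Perm ι) : R)
  have hc : 0 < c ^ 2 := pow_pos (Nat.cast_pos.mpr Fintype.card_pos) 2
  refine le_of_mul_le_mul_left ?_ hc
  calc c ^ 2 * (Uᵀ * V).per ^ 2 = (c * (Uᵀ * V).per) ^ 2 := by ring
    _ ≤ (c * (Uᵀ * U).per) * (c * (Vᵀ * V).per) := by
        simp only [c, card_perm_mul_per_transpose_mul, ← sq]
        exact sum_mul_sq_le_sq_mul_sq _ _ _
    _ = c ^ 2 * ((Uᵀ * U).per * (Vᵀ * V).per) := by ring

end Gram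

namespace PosSemidef

variable {ι n : Type*} [Fintype ι] [DecidableEq ι] [Fintype n] {A : Matrix n n ℝ}

theorem exists_eq_transpose_mul_self (hA : A.PosSemidef) : ∃ B : Matrix n n ℝ, A = Bᵀ * B := by
  classical
  open scoped MatrixOrder in
  obtain ⟨B, hB⟩ := CStarAlgebra.nonneg_iff_eq_star_mul_self.mp hA.nonneg
  exact ⟨B, hB.trans (by rw [star_eq_conjTranspose, conjTranspose_eq_transpose_of_trivial])⟩

theorem per_submatrix_self_nonneg (hA : A.PosSemidef) (f : ι → n) :
    0 ≤ (A.submatrix f f).per := by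
  obtain ⟨B, rfl⟩ := hA.exists_eq_transpose_mul_self
  rw [transpose_mul_submatrix]
  exact per_transpose_mul_self_nonneg _

theorem sq_per_submatrix_le (hA : A.PosSemidef) (f g : ι → n) :
    (A.submatrix f g).per ^ 2 ≤ (A.submatrix f f).per * (A.submatrix g g).per := by
  obtain ⟨B, rfl⟩ := hA.exists_eq_transpose_mul_self
  simp only [transpose_mul_submatrix]
  exact sq_per_transpose_mul_le _ _

theorem per_submatrix_self_pos (hA : A.PosSemidef) {f g : ι → n}
    (hfg : (A.submatrix f g).per ≠ 0) : 0 < (A.submatrix f f).per := by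
  refine (hA.per_submatrix_self_nonneg f).lt_of_ne fun h => hfg ?_
  have := hA.sq_per_submatrix_le f g
  rw [← h, zero_mul] at this
  exact pow_eq_zero_iff two_ne_zero |>.mp (le_antisymm this (sq_nonneg _))

end PosSemidef

section Principal

variable {ι R : Type*} [DecidableEq ι] [CommSemiring R]

noncomputable def principalPer (M : Matrix ι ι R) (t : Finset ι) : R :=
  (M.submatrix (↑) (↑) : Matrix t t R).per

theorem principalPer_map {S : Type*} [CommSemiring S] (f : R →+* S) (M : Matrix ι ι R)
    (t : Finset ι) : (M.map f).principalPer t = f (M.principalPer t) := by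
  rw [principalPer, principalPer, ← per_map, submatrix_map]

variable [Fintype ι]

noncomputable def principalPerSum (M : Matrix ι ι R) (k : ℕ) : R :=
  ∑ t ∈ powersetCard k univ, M.principalPer t

theorem principalPer_eq_sum_perm (M : Matrix ι ι R) (t : Finset ι) :
    M.principalPer t
      = ∑ e : Equiv.Perm ι with ∀ i ∉ t, e i = i, ∏ i ∈ t, M i (e i) := by
  calc M.principalPer t
      = ∑ σ : Equiv.Perm {x : ι // x ∈ t}, ∏ i ∈ t, M i (Equiv.Perm.ofSubtype σ i) := by
        refine sum_congr rfl fun σ _ => ?_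
        rw [← prod_coe_sort t]
        simp
    _ = ∑ e : {e : Equiv.Perm ι // ∀ i, i ∉ t → e i = i}, ∏ i ∈ t, M i (e.1 i) :=
        Fintype.sum_equiv (Equiv.Perm.subtypeEquivSubtypePerm (· ∈ t)) _ _ fun _ => rfl
    _ = ∑ e : Equiv.Perm ι with ∀ i ∉ t, e i = i, ∏ i ∈ t, M i (e i) := by
        rw [sum_subtype _ mem_filter_univ]

theorem prod_compl_diagonal_apply (d : ι → R) (e : Equiv.Perm ι) (t : Finset ι) :
    ∏ i ∈ tᶜ, diagonal d i (e i) = if ∀ i ∉ t, e i = i then ∏ i ∈ tᶜ, d i else 0 := by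
  split_ifs with he
  · exact prod_congr rfl fun i hi => by rw [he i (mem_compl.mp hi), diagonal_apply_eq]
  · push Not at he
    obtain ⟨i, hi, hei⟩ := he
    exact prod_eq_zero (mem_compl.mpr hi) (diagonal_apply_ne _ (Ne.symm hei))

theorem per_add_diagonal (M : Matrix ι ι R) (d : ι → R) :
    (M + diagonal d).per
      = ∑ t : Finset ι, M.principalPer t * ∏ i ∈ tᶜ, d i := by
  simp_rw [principalPer_eq_sum_perm, sum_filter, sum_mul, per, add_apply,
    Fintype.prod_add]
  rw [sum_comm]
  refine sum_congr rfl fun t _ => sum_congr rfl fun e _ => ?_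
  rw [prod_compl_diagonal_apply]
  split_ifs <;> simp

theorem principalPerSum_zero (M : Matrix ι ι R) : M.principalPerSum 0 = 1 := by
  simp [principalPerSum, principalPer, per_of_isEmpty]

theorem principalPerSum_eq_zero_of_card_lt (M : Matrix ι ι R) {k : ℕ}
    (h : Fintype.card ι < k) : M.principalPerSum k = 0 := by
  rw [principalPerSum, powersetCard_eq_empty.mpr (by rwa [card_univ]), sum_empty]

theorem PosSemidef.principalPer_nonneg {A : Matrix ι ι ℝ} (hA : A.PosSemidef) (t : Finset ι) :
    0 ≤ A.principalPer t :=
  hA.per_submatrix_self_nonneg _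

theorem PosSemidef.principalPerSum_pos {A : Matrix ι ι ℝ} (hA : A.PosSemidef) {k : ℕ}
    {f g : Fin k → ι} (hf : Function.Injective f) (hfg : (A.submatrix f g).per ≠ 0) :
    0 < A.principalPerSum k := by
  let e : Fin k ≃ univ.image f :=
    (Equiv.ofInjective f hf).trans (Equiv.subtypeEquivRight fun _ => by simp)
  have hpos : 0 < A.principalPer (univ.image f) := by
    rw [principalPer, ← per_submatrix_equiv _ e e, submatrix_submatrix]
    exact hA.per_submatrix_self_pos hfg
  refine hpos.trans_le (single_le_sum (fun t _ => hA.principalPer_nonneg t) ?_)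
  simp [mem_powersetCard, card_image_of_injective _ hf]

end Principal

end Matrix

open Matrix

section PermPoly

variable {n : ℕ} {R : Type*} [CommRing R]

theorem permPoly_eq_sum (A : Matrix (Fin n) (Fin n) R) :
    permPoly A = ∑ t : Finset (Fin n), C (A.principalPer t) * (-X) ^ (n - #t) := by
  rw [permPoly, sub_eq_add_neg, ← neg_smul, smul_one_eq_diagonal, per_add_diagonal]
  refine sum_congr rfl fun t _ => ?_
  rw [prod_const, card_compl, Fintype.card_fin, principalPer_map]

theorem coeff_permPoly (A : Matrix (Fin n) (Fin n) R) {j : ℕ} (hj : j ≤ n) :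
    (permPoly A).coeff j = (-1) ^ j * A.principalPerSum (n - j) := by
  have hterm (t : Finset (Fin n)) : (C (A.principalPer t) * (-X) ^ (n - #t)).coeff j
      = if #t = n - j then (-1) ^ j * A.principalPer t else 0 := by
    have : ((-1 : R[X]) ^ (n - #t)) = C ((-1) ^ (n - #t)) := by simp
    rw [neg_pow, ← mul_assoc, this, ← C_mul, coeff_C_mul_X_pow]
    have := card_le_univ t
    rw [Fintype.card_fin] at this
    split_ifs with h1 h2 h2 <;> first | omega | rfl | rw [← h1, mul_comm]
  rw [principalPerSum, mul_sum, powersetCard_eq_filter, powerset_univ, sum_filter,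
    permPoly_eq_sum, finsetSum_coeff]
  exact sum_congr rfl fun t _ => hterm t

theorem permNullity_eq_sub {A : Matrix (Fin n) (Fin n) R} {K : ℕ} (hK : A.principalPerSum K ≠ 0)
    (hgt : ∀ k, K < k → A.principalPerSum k = 0) : permNullity A = n - K := by
  have hKn : K ≤ n := by
    by_contra h
    exact hK (A.principalPerSum_eq_zero_of_card_lt (by simpa using h))
  have hcoeff : (permPoly A).coeff (n - K) ≠ 0 := by
    rwa [coeff_permPoly A (Nat.sub_le n K), Nat.sub_sub_self hKn,
      ((isUnit_neg_one (α := R)).pow _).mul_right_eq_zero.ne]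
  rw [permNullity, rootMultiplicity_eq_natTrailingDegree']
  refine le_antisymm (natTrailingDegree_le_of_ne_zero hcoeff)
    (le_natTrailingDegree (fun h => hcoeff (by rw [h, coeff_zero])) fun m hm => ?_)
  rw [coeff_permPoly A (by omega), hgt _ (by omega), mul_zero]

end PermPoly

section PermRank

variable {n k : ℕ}

theorem le_permRank {R : Type*} [CommSemiring R] {A : Matrix (Fin n) (Fin n) R}
    {f g : Fin k → Fin n} (hf : Function.Injective f) (hg : Function.Injective g)
    (hfg : (A.submatrix f g).per ≠ 0) : k ≤ permRank A :=
  le_csSup ⟨n, fun _ ⟨f, _, hf, _⟩ => by simpa using Fintype.card_le_of_injective f hf⟩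
    ⟨f, g, hf, hg, hfg⟩

theorem le_permRank_of_principalPerSum_ne_zero {R : Type*} [CommSemiring R]
    {A : Matrix (Fin n) (Fin n) R} (h : A.principalPerSum k ≠ 0) : k ≤ permRank A := by
  obtain ⟨t, ht, hne⟩ := exists_ne_zero_of_sum_ne_zero h
  let e : Fin k ≃ t := (t.equivFinOfCardEq (mem_powersetCard.mp ht).2).symm
  have he : Function.Injective (Subtype.val ∘ e) := Subtype.val_injective.comp e.injective
  refine le_permRank he he ?_
  rwa [← submatrix_submatrix, per_submatrix_equiv]

theorem Matrix.PosSemidef.permRank_le {A : Matrix (Fin n) (Fin n) ℝ} (hA : A.PosSemidef) {K : ℕ}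
    (hgt : ∀ k, K < k → A.principalPerSum k = 0) : permRank A ≤ K :=
  csSup_le' fun k ⟨_, _, hf, _, hfg⟩ =>
    not_lt.mp fun hk => (hA.principalPerSum_pos hf hfg).ne' (hgt k hk)

end PermRank

theorem perm_rank_add_nullity_of_posSemidef_general {n : ℕ} (A : Matrix (Fin n) (Fin n) ℝ)
    (hpsd : A.PosSemidef) :
    permRank A + permNullity A = n := by
  set K := Nat.findGreatest (fun k => A.principalPerSum k ≠ 0) n
  have hK : A.principalPerSum K ≠ 0 :=
    Nat.findGreatest_spec (P := fun k => A.principalPerSum k ≠ 0) (Nat.zero_le n)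
      (by rw [principalPerSum_zero]; exact one_ne_zero)
  have hgt : ∀ k, K < k → A.principalPerSum k = 0 := fun k hk => by
    by_cases hkn : k ≤ n
    · exact not_not.mp (Nat.findGreatest_is_greatest hk hkn)
    · exact A.principalPerSum_eq_zero_of_card_lt (by simpa using hkn)
  rw [le_antisymm (hpsd.permRank_le hgt) (le_permRank_of_principalPerSum_ne_zero hK),
    permNullity_eq_sub hK hgt]
  have hKn : K ≤ n := Nat.findGreatest_le n
  omega

/-- For a positive semi-definite real symmetric `n × n` matrix `A`,
`ρ_per(A) + η_per(A) = n`. -/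
theorem perm_rank_add_nullity_of_posSemidef {n : ℕ} (A : Matrix (Fin n) (Fin n) ℝ)
    (hsym : A.IsSymm) (hpsd : A.PosSemidef) :
    permRank A + permNullity A = n :=
  perm_rank_add_nullity_of_posSemidef_general A hpsd
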